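/- arXiv:1906.02149 — 3 statements merged into one kernel-verified Lean document; each statement's English description precedes it below -/
import Mathlib

section
/- Let φ: S → T be a premorphism between restriction semigroups. Then: (1) φ satisfies (LSr) (φ(s t^+)φ(t) = φ(st)φ(t)^* for all s, t ∈ S) if and only if φ satisfies (LSr'): φ(s)φ(t) = φ(st)φ(t)^* for all s, t ∈ S with s^* ≤ t^+; (2) φ satisfies (LSl) (φ(s)φ(s^* t) = φ(s)^+ φ(st) for all s, t ∈ S) if and only if φ satisfies (LSl'): φ(s)φ(t) = φ(s)^+ φ(st) for all s, t ∈ S with t^+ ≤ s^*. -/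
/-- A (two-sided) restriction semigroup: a semigroup with unary operations
`rstar` (`x ↦ x^*`) and `rplus` (`x ↦ x^+`) satisfying the standard identities. -/
class RestrictionSemigroup (S : Type*) extends Semigroup S where
  rstar : S → S
  rplus : S → S
  rplus_mul_self : ∀ x : S, rplus x * x = x
  rplus_comm : ∀ x y : S, rplus x * rplus y = rplus y * rplus x
  rplus_rplus_mul : ∀ x y : S, rplus (rplus x * y) = rplus x * rplus y
  mul_rplus : ∀ x y : S, rplus (x * y) * x = x * rplus y
  mul_rstar_self : ∀ x : S, x * rstar x = x
  rstar_comm : ∀ x y : S, rstar x * rstar y = rstar y * rstar x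
  rstar_mul_rstar : ∀ x y : S, rstar (x * rstar y) = rstar x * rstar y
  rstar_mul : ∀ x y : S, y * rstar (x * y) = rstar x * y
  rstar_rplus : ∀ x : S, rstar (rplus x) = rplus x
  rplus_rstar : ∀ x : S, rplus (rstar x) = rstar x

open RestrictionSemigroup

/-- `e` is a projection: `e ∈ P(S) = {s^* : s ∈ S}`. -/
def IsProj {S : Type*} [RestrictionSemigroup S] (e : S) : Prop :=
  ∃ s : S, rstar s = e

/-- The natural partial order: `s ≤ t` iff `s = t f` for some projection `f`. -/
def rle {S : Type*} [RestrictionSemigroup S] (s t : S) : Prop :=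
  ∃ f : S, IsProj f ∧ s = t * f

/-- Compatibility: `s ∼ t` iff `s t^* = t s^*` and `t^+ s = s^+ t`. -/
def compat {S : Type*} [RestrictionSemigroup S] (s t : S) : Prop :=
  s * rstar t = t * rstar s ∧ rplus t * s = rplus s * t

/-!
If `s^* ≤ t^+` then `s t^+ = s`, so (LSr) specialises to (LSr'). Conversely
`(s t^+)^* = t^+ s^* ≤ t^+` and `s t^+ t = s t`, so (LSr') applied to the pair `(s t^+, t)`
is (LSr). Part (2) is the left-right dual.
-/

namespace RestrictionSemigroup

variable {S : Type*} [RestrictionSemigroup S]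

theorem rstar_rstar (x : S) : rstar (rstar x) = rstar x := by
  simpa only [rplus_rstar] using rstar_rplus (rstar x)

theorem isProj_rstar (x : S) : IsProj (rstar x) := ⟨x, rfl⟩

theorem isProj_rplus (x : S) : IsProj (rplus x) := ⟨rplus x, rstar_rplus x⟩

theorem IsProj.rstar_eq {e : S} (he : IsProj e) : rstar e = e := by
  obtain ⟨x, rfl⟩ := he
  exact rstar_rstar x

theorem IsProj.rplus_eq {e : S} (he : IsProj e) : rplus e = e := by
  obtain ⟨x, rfl⟩ := he
  exact rplus_rstar x

theorem IsProj.mul_self {e : S} (he : IsProj e) : e * e = e := by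
  simpa only [he.rstar_eq] using mul_rstar_self e

theorem IsProj.mul_comm {e f : S} (he : IsProj e) (hf : IsProj f) : e * f = f * e := by
  simpa only [he.rstar_eq, hf.rstar_eq] using rstar_comm e f

theorem mul_eq_self_of_rle_rstar {e s : S} (he : IsProj e) (h : rle (rstar s) e) :
    s * e = s := by
  obtain ⟨f, hf, hs⟩ := h
  have hse : rstar s * e = rstar s := by
    rw [hs, mul_assoc, hf.mul_comm he, ← mul_assoc, he.mul_self]
  calc s * e = s * rstar s * e := by rw [mul_rstar_self]
    _ = s := by rw [mul_assoc, hse, mul_rstar_self]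

theorem mul_eq_self_of_rle_rplus {e t : S} (he : IsProj e) (h : rle (rplus t) e) :
    e * t = t := by
  obtain ⟨f, -, ht⟩ := h
  have het : e * rplus t = rplus t := by rw [ht, ← mul_assoc, he.mul_self]
  calc e * t = e * rplus t * t := by rw [mul_assoc, rplus_mul_self]
    _ = t := by rw [het, rplus_mul_self]

theorem rle_rstar_mul {e : S} (he : IsProj e) (s : S) : rle (rstar (s * e)) e := by
  refine ⟨rstar s, isProj_rstar s, ?_⟩
  conv_lhs => rw [← he.rstar_eq]
  rw [rstar_mul_rstar, he.rstar_eq, (isProj_rstar s).mul_comm he]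

theorem rle_rplus_mul {e : S} (he : IsProj e) (t : S) : rle (rplus (e * t)) e := by
  refine ⟨rplus t, isProj_rplus t, ?_⟩
  conv_lhs => rw [← he.rplus_eq]
  rw [rplus_rplus_mul, he.rplus_eq]

theorem forall_mul_rplus_iff {Q : S → S → Prop} :
    (∀ s t : S, Q (s * rplus t) t) ↔ ∀ s t : S, rle (rstar s) (rplus t) → Q s t :=
  ⟨fun h s t hst => mul_eq_self_of_rle_rstar (isProj_rplus t) hst ▸ h s t,
    fun h s t => h _ t (rle_rstar_mul (isProj_rplus t) s)⟩

theorem forall_rstar_mul_iff {Q : S → S → Prop} :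
    (∀ s t : S, Q s (rstar s * t)) ↔ ∀ s t : S, rle (rplus t) (rstar s) → Q s t :=
  ⟨fun h s t hts => mul_eq_self_of_rle_rplus (isProj_rstar s) hts ▸ h s t,
    fun h s t => h s _ (rle_rplus_mul (isProj_rstar s) t)⟩

end RestrictionSemigroup

theorem stmt9_general {S T : Type*} [RestrictionSemigroup S] [RestrictionSemigroup T]
    (φ : S → T) :
    ((∀ s t : S, φ (s * rplus t) * φ t = φ (s * t) * rstar (φ t)) ↔
      (∀ s t : S, rle (rstar s) (rplus t) → φ s * φ t = φ (s * t) * rstar (φ t))) ∧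
    ((∀ s t : S, φ s * φ (rstar s * t) = rplus (φ s) * φ (s * t)) ↔
      (∀ s t : S, rle (rplus t) (rstar s) → φ s * φ t = rplus (φ s) * φ (s * t))) := by
  constructor
  · simpa only [mul_assoc, rplus_mul_self] using
      forall_mul_rplus_iff (Q := fun s t => φ s * φ t = φ (s * t) * rstar (φ t))
  · simpa only [← mul_assoc, mul_rstar_self] using
      forall_rstar_mul_iff (Q := fun s t => φ s * φ t = rplus (φ s) * φ (s * t))

theorem stmt9 {S T : Type*} [RestrictionSemigroup S] [RestrictionSemigroup T]
    (φ : S → T)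
    (hPM1 : ∀ s t : S, rle (φ s * φ t) (φ (s * t)))
    (hPM2 : ∀ s : S, rle (rstar (φ s)) (φ (rstar s)))
    (hPM3 : ∀ s : S, rle (rplus (φ s)) (φ (rplus s))) :
    ((∀ s t : S, φ (s * rplus t) * φ t = φ (s * t) * rstar (φ t)) ↔
      (∀ s t : S, rle (rstar s) (rplus t) → φ s * φ t = φ (s * t) * rstar (φ t))) ∧
    ((∀ s t : S, φ s * φ (rstar s * t) = rplus (φ s) * φ (s * t)) ↔
      (∀ s t : S, rle (rplus t) (rstar s) → φ s * φ t = rplus (φ s) * φ (s * t))) :=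
  stmt9_general φ
end

section
/- Let φ: S → T be a premorphism between inverse semigroups (regarded as restriction semigroups). Then each of the following four conditions is equivalent to (Inv): φ(s⁻¹) = φ(s)⁻¹ for all s ∈ S. (LSr'): φ(s)φ(t) = φ(st)φ(t)^* for all s, t with s^* ≤ t^+; (LSl'): φ(s)φ(t) = φ(s)^+ φ(st) for all s, t with t^+ ≤ s^*; (LSr''): φ(s)φ(t) = φ(st)φ(t)^* for all s, t with s^* = t^+; (LSl''): φ(s)φ(t) = φ(s)^+ φ(st) for all s, t with t^+ = s^*. Consequently, φ is locally strong (satisfies both (LSr) and (LSl)) if and only if it satisfies (Inv). -/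
/-- An inverse semigroup: each element has a unique (von Neumann) inverse. -/
class InverseSemigroup (S : Type*) extends Semigroup S where
  inv : S → S
  mul_inv_mul : ∀ a : S, a * inv a * a = a
  inv_mul_inv : ∀ a : S, inv a * a * inv a = inv a
  inv_unique : ∀ a b : S, a * b * a = a → b * a * b = b → b = inv a

/-- `s^* = s⁻¹ s` when an inverse semigroup is regarded as a restriction semigroup. -/
def istar {S : Type*} [InverseSemigroup S] (s : S) : S := InverseSemigroup.inv s * s

/-- `s^+ = s s⁻¹` when an inverse semigroup is regarded as a restriction semigroup. -/
def iplus {S : Type*} [InverseSemigroup S] (s : S) : S := s * InverseSemigroup.inv s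

/-- `e ∈ P(S) = {s^* : s ∈ S}` for an inverse semigroup. -/
def iIsProj {S : Type*} [InverseSemigroup S] (e : S) : Prop := ∃ s : S, istar s = e

/-- The natural partial order on an inverse semigroup regarded as a restriction semigroup. -/
def ile {S : Type*} [InverseSemigroup S] (s t : S) : Prop :=
  ∃ f : S, iIsProj f ∧ s = t * f

/-!
If `φ` commutes with inversion and `s * t * t⁻¹ = s` (which is what `s^* ≤ t^+` gives), then
(PM1) applied to `s t` and `t⁻¹` yields `φ(st) φ(t)⁻¹ ≤ φ(s)`; this collapses the identity
`φ(s) φ(t) = φ(st) (φ(s) φ(t))^*` coming from `φ(s) φ(t) ≤ φ(st)` into (LSr'), and dually (LSl').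
Conversely, (LSr'') applied to `v⁻¹, v` together with (PM2) gives `φ(v⁻¹) φ(v) = φ(v)^*`, so
`φ(v⁻¹)` is an inverse of `φ(v)` and equals `φ(v)⁻¹` by uniqueness of inverses; dually for (LSl'').
Finally (LSr) specialises to (LSr''), and (LSr') implies (LSr) since `(s t^+)^* ≤ t^+`.
-/

namespace InverseSemigroup

variable {S : Type*} [InverseSemigroup S]

theorem inv_inv (a : S) : inv (inv a) = a :=
  (inv_unique (inv a) a (inv_mul_inv a) (mul_inv_mul a)).symm

theorem iplus_mul (a : S) : iplus a * a = a := mul_inv_mul a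

theorem mul_istar (a : S) : a * istar a = a := by rw [istar, ← mul_assoc, mul_inv_mul]

theorem istar_inv (a : S) : istar (inv a) = iplus a := by rw [istar, iplus, inv_inv]

theorem iplus_inv (a : S) : iplus (inv a) = istar a := by rw [istar, iplus, inv_inv]

theorem isIdempotentElem_istar (a : S) : IsIdempotentElem (istar a) := by
  rw [IsIdempotentElem, istar, ← mul_assoc, inv_mul_inv]

theorem isIdempotentElem_iplus (a : S) : IsIdempotentElem (iplus a) := by
  rw [IsIdempotentElem, iplus, ← mul_assoc, mul_inv_mul]

theorem _root_.IsIdempotentElem.inv_eq {e : S} (he : IsIdempotentElem e) : inv e = e :=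
  (inv_unique e e (by rw [he.eq, he.eq]) (by rw [he.eq, he.eq])).symm

theorem _root_.IsIdempotentElem.istar_eq {e : S} (he : IsIdempotentElem e) : istar e = e := by
  rw [istar, he.inv_eq, he.eq]

theorem _root_.IsIdempotentElem.iplus_eq {e : S} (he : IsIdempotentElem e) : iplus e = e := by
  rw [iplus, he.inv_eq, he.eq]

theorem isIdempotentElem_mul {e f : S} (he : IsIdempotentElem e) (hf : IsIdempotentElem f) :
    IsIdempotentElem (e * f) := by
  have he' (z : S) : e * (e * z) = e * z := by rw [← mul_assoc, he.eq]
  have hf' (z : S) : f * (f * z) = f * z := by rw [← mul_assoc, hf.eq]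
  set x := inv (e * f)
  -- `f * x * e` is an inverse of `e * f`, hence equal to `x`; this makes `x` idempotent.
  have hx : f * x * e = x := by
    refine inv_unique (e * f) (f * x * e) ?_ ?_
    · calc e * f * (f * x * e) * (e * f) = e * f * x * (e * f) := by
            simp only [mul_assoc, he', hf']
        _ = e * f := mul_inv_mul _
    · calc f * x * e * (e * f) * (f * x * e) = f * (x * (e * f) * x) * e := by
            simp only [mul_assoc, he', hf']
        _ = f * x * e := by rw [inv_mul_inv, mul_assoc]
  have hxx : IsIdempotentElem x := by
    calc x * x = f * (x * (e * f) * x) * e := by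
          conv_lhs => rw [← hx]
          simp only [mul_assoc]
      _ = x := by rw [inv_mul_inv]; exact hx
  rw [← inv_inv (e * f), hxx.inv_eq]
  exact hxx

theorem _root_.IsIdempotentElem.mul_comm {e f : S} (he : IsIdempotentElem e)
    (hf : IsIdempotentElem f) : e * f = f * e := by
  have he' (z : S) : e * (e * z) = e * z := by rw [← mul_assoc, he.eq]
  have hf' (z : S) : f * (f * z) = f * z := by rw [← mul_assoc, hf.eq]
  have hef := isIdempotentElem_mul he hf
  rw [← hef.inv_eq]
  refine (inv_unique (e * f) (f * e) ?_ ?_).symm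
  · calc e * f * (f * e) * (e * f) = e * f * (e * f) := by simp only [mul_assoc, he', hf']
      _ = e * f := hef
  · calc f * e * (e * f) * (f * e) = f * e * (f * e) := by simp only [mul_assoc, he', hf']
      _ = f * e := isIdempotentElem_mul hf he

theorem mul_inv_rev (a b : S) : inv (a * b) = inv b * inv a := by
  have hcomm := (isIdempotentElem_iplus b).mul_comm (isIdempotentElem_istar a)
  refine (inv_unique (a * b) (inv b * inv a) ?_ ?_).symm
  · calc a * b * (inv b * inv a) * (a * b) = a * (iplus b * istar a) * b := by
          simp only [istar, iplus, mul_assoc]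
      _ = a * istar a * (iplus b * b) := by rw [hcomm]; simp only [mul_assoc]
      _ = a * b := by rw [mul_istar, iplus_mul]
  · calc inv b * inv a * (a * b) * (inv b * inv a) = inv b * (istar a * iplus b) * inv a := by
          simp only [istar, iplus, mul_assoc]
      _ = inv b * b * inv b * (inv a * a * inv a) := by
          rw [← hcomm]; simp only [istar, iplus, mul_assoc]
      _ = inv b * inv a := by rw [inv_mul_inv, inv_mul_inv]

theorem istar_mul_of_isIdempotentElem {f : S} (a : S) (hf : IsIdempotentElem f) :
    istar (a * f) = istar a * f := by
  rw [istar, mul_inv_rev, hf.inv_eq]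
  calc f * inv a * (a * f) = istar a * f * f := by
        rw [(isIdempotentElem_istar a).mul_comm hf, istar]; simp only [mul_assoc]
    _ = istar a * f := by rw [mul_assoc, hf.eq]

theorem iplus_mul_of_isIdempotentElem {e : S} (a : S) (he : IsIdempotentElem e) :
    iplus (e * a) = e * iplus a := by
  rw [iplus, mul_inv_rev, he.inv_eq]
  calc e * a * (inv a * e) = e * (e * iplus a) := by
        rw [he.mul_comm (isIdempotentElem_iplus a), iplus]; simp only [mul_assoc]
    _ = e * iplus a := by rw [← mul_assoc, he.eq]

theorem iIsProj_iff {e : S} : iIsProj e ↔ IsIdempotentElem e :=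
  ⟨fun ⟨a, ha⟩ => ha ▸ isIdempotentElem_istar a, fun he => ⟨e, he.istar_eq⟩⟩

theorem ile_refl (a : S) : ile a a := ⟨istar a, ⟨a, rfl⟩, (mul_istar a).symm⟩

theorem ile_of_eq_mul {x y f : S} (hf : IsIdempotentElem f) (h : x = y * f) : ile x y :=
  ⟨f, iIsProj_iff.2 hf, h⟩

theorem _root_.ile.eq_mul_istar {x y : S} (h : ile x y) : x = y * istar x := by
  obtain ⟨f, hf, rfl⟩ := h
  rw [istar_mul_of_isIdempotentElem y (iIsProj_iff.1 hf), ← mul_assoc, mul_istar]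

theorem _root_.ile.eq_iplus_mul {x y : S} (h : ile x y) : x = iplus x * y := by
  obtain ⟨f, hf, rfl⟩ := h
  have hf := iIsProj_iff.1 hf
  calc y * f = y * (istar y * f) := by rw [← mul_assoc, mul_istar]
    _ = y * (f * f) * istar y := by rw [(isIdempotentElem_istar y).mul_comm hf, hf.eq, mul_assoc]
    _ = iplus (y * f) * y := by rw [iplus, mul_inv_rev, hf.inv_eq, istar]; simp only [mul_assoc]

theorem _root_.ile.mul_istar_eq {x y : S} (h : ile x y) : x * istar y = x := by
  rw [h.eq_mul_istar, mul_assoc, (isIdempotentElem_istar x).mul_comm (isIdempotentElem_istar y),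
    ← mul_assoc, mul_istar, ← h.eq_mul_istar]

theorem _root_.ile.iplus_mul_eq {x y : S} (h : ile x y) : iplus y * x = x := by
  rw [h.eq_iplus_mul, ← mul_assoc, (isIdempotentElem_iplus y).mul_comm (isIdempotentElem_iplus x),
    mul_assoc, iplus_mul, ← h.eq_iplus_mul]

theorem _root_.ile.mul_eq_left {e f : S} (h : ile e f) (hf : IsIdempotentElem f) : e * f = e := by
  simpa only [hf.istar_eq] using h.mul_istar_eq

theorem _root_.ile.mul_eq_right {e f : S} (h : ile e f) (hf : IsIdempotentElem f) :
    f * e = e := by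
  simpa only [hf.iplus_eq] using h.iplus_mul_eq

theorem eq_inv_of_mul_eq_istar {a b : S} (hba : b * a = istar a) (hab : a * b = istar b) :
    b = inv a :=
  inv_unique a b (by rw [mul_assoc, hba, mul_istar]) (by rw [mul_assoc, hab, mul_istar])

theorem eq_inv_of_mul_eq_iplus {a b : S} (hab : a * b = iplus a) (hba : b * a = iplus b) :
    b = inv a :=
  inv_unique a b (by rw [hab, iplus_mul]) (by rw [hba, iplus_mul])

section Premorphism

variable {T : Type*} [InverseSemigroup T] {φ : S → T}

theorem map_mul_map_of_istar_ile_iplus (hPM1 : ∀ s t : S, ile (φ s * φ t) (φ (s * t)))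
    (hinv : ∀ s : S, φ (inv s) = inv (φ s)) {s t : S} (h : ile (istar s) (iplus t)) :
    φ s * φ t = φ (s * t) * istar (φ t) := by
  have hs : s * t * inv t = s := by
    rw [mul_assoc, ← iplus, ← mul_istar s, mul_assoc, h.mul_eq_left (isIdempotentElem_iplus t)]
  have hle : ile (φ (s * t) * inv (φ t)) (φ s) := by
    simpa only [hinv, hs] using hPM1 (s * t) (inv t)
  calc φ s * φ t = φ (s * t) * istar (φ s * φ t) := (hPM1 s t).eq_mul_istar
    _ = φ (s * t) * inv (φ t) * istar (φ s) * φ t := by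
        rw [istar, istar, mul_inv_rev]; simp only [mul_assoc]
    _ = φ (s * t) * istar (φ t) := by rw [hle.mul_istar_eq, istar, mul_assoc]

theorem map_mul_map_of_iplus_ile_istar (hPM1 : ∀ s t : S, ile (φ s * φ t) (φ (s * t)))
    (hinv : ∀ s : S, φ (inv s) = inv (φ s)) {s t : S} (h : ile (iplus t) (istar s)) :
    φ s * φ t = iplus (φ s) * φ (s * t) := by
  have ht : inv s * (s * t) = t := by
    rw [← mul_assoc, ← istar, ← iplus_mul t, ← mul_assoc,
      h.mul_eq_right (isIdempotentElem_istar s)]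
  have hle : ile (inv (φ s) * φ (s * t)) (φ t) := by
    simpa only [hinv, ht] using hPM1 (inv s) (s * t)
  calc φ s * φ t = iplus (φ s * φ t) * φ (s * t) := (hPM1 s t).eq_iplus_mul
    _ = φ s * (iplus (φ t) * (inv (φ s) * φ (s * t))) := by
        rw [iplus, iplus, mul_inv_rev]; simp only [mul_assoc]
    _ = iplus (φ s) * φ (s * t) := by rw [hle.iplus_mul_eq, iplus, mul_assoc]

theorem map_inv_of_istar_eq_iplus (hPM2 : ∀ s : S, ile (istar (φ s)) (φ (istar s)))
    (h : ∀ s t : S, istar s = iplus t → φ s * φ t = φ (s * t) * istar (φ t)) (s : S) :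
    φ (inv s) = inv (φ s) := by
  have hidem {e : S} (he : IsIdempotentElem e) : IsIdempotentElem (φ e) := by
    have hee := h e e (by rw [he.istar_eq, he.iplus_eq])
    rw [he.eq] at hee
    rw [IsIdempotentElem, hee, mul_istar]
  have hstar (v : S) : φ (inv v) * φ v = istar (φ v) :=
    (h (inv v) v (istar_inv v)).trans ((hPM2 v).mul_eq_right (hidem (isIdempotentElem_istar v)))
  exact eq_inv_of_mul_eq_istar (hstar s) (by simpa only [inv_inv] using hstar (inv s))

theorem map_inv_of_iplus_eq_istar (hPM3 : ∀ s : S, ile (iplus (φ s)) (φ (iplus s)))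
    (h : ∀ s t : S, iplus t = istar s → φ s * φ t = iplus (φ s) * φ (s * t)) (s : S) :
    φ (inv s) = inv (φ s) := by
  have hidem {e : S} (he : IsIdempotentElem e) : IsIdempotentElem (φ e) := by
    have hee := h e e (by rw [he.istar_eq, he.iplus_eq])
    rw [he.eq] at hee
    rw [IsIdempotentElem, hee, iplus_mul]
  have hplus (v : S) : φ v * φ (inv v) = iplus (φ v) :=
    (h v (inv v) (iplus_inv v)).trans ((hPM3 v).mul_eq_left (hidem (isIdempotentElem_iplus v)))
  exact eq_inv_of_mul_eq_iplus (hplus s) (by simpa only [inv_inv] using hplus (inv s))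

theorem map_mul_iplus_mul_map
    (h : ∀ s t : S, ile (istar s) (iplus t) → φ s * φ t = φ (s * t) * istar (φ t)) (s t : S) :
    φ (s * iplus t) * φ t = φ (s * t) * istar (φ t) := by
  have hle : ile (istar (s * iplus t)) (iplus t) := by
    rw [istar_mul_of_isIdempotentElem s (isIdempotentElem_iplus t)]
    exact ile_of_eq_mul (isIdempotentElem_istar s)
      ((isIdempotentElem_istar s).mul_comm (isIdempotentElem_iplus t))
  simpa only [mul_assoc, iplus_mul] using h _ t hle

theorem map_mul_map_istar_mul
    (h : ∀ s t : S, ile (iplus t) (istar s) → φ s * φ t = iplus (φ s) * φ (s * t)) (s t : S) :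
    φ s * φ (istar s * t) = iplus (φ s) * φ (s * t) := by
  have hle : ile (iplus (istar s * t)) (istar s) := by
    rw [iplus_mul_of_isIdempotentElem t (isIdempotentElem_istar s)]
    exact ile_of_eq_mul (isIdempotentElem_iplus t) rfl
  simpa only [← mul_assoc, mul_istar] using h s _ hle

end Premorphism

end InverseSemigroup

open InverseSemigroup

theorem stmt10 {S T : Type*} [InverseSemigroup S] [InverseSemigroup T]
    (φ : S → T)
    (hPM1 : ∀ s t : S, ile (φ s * φ t) (φ (s * t)))
    (hPM2 : ∀ s : S, ile (istar (φ s)) (φ (istar s)))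
    (hPM3 : ∀ s : S, ile (iplus (φ s)) (φ (iplus s))) :
    List.TFAE
      [∀ s : S, φ (InverseSemigroup.inv s) = InverseSemigroup.inv (φ s),
       ∀ s t : S, ile (istar s) (iplus t) → φ s * φ t = φ (s * t) * istar (φ t),
       ∀ s t : S, ile (iplus t) (istar s) → φ s * φ t = iplus (φ s) * φ (s * t),
       ∀ s t : S, istar s = iplus t → φ s * φ t = φ (s * t) * istar (φ t),
       ∀ s t : S, iplus t = istar s → φ s * φ t = iplus (φ s) * φ (s * t)]
    ∧
    (((∀ s t : S, φ (s * iplus t) * φ t = φ (s * t) * istar (φ t)) ∧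
        (∀ s t : S, φ s * φ (istar s * t) = iplus (φ s) * φ (s * t))) ↔
      (∀ s : S, φ (InverseSemigroup.inv s) = InverseSemigroup.inv (φ s))) := by
  refine ⟨?_, ⟨fun ⟨hLSr, _⟩ => ?_, fun hinv => ⟨?_, ?_⟩⟩⟩
  · tfae_have 1 → 2 := fun hinv _ _ => map_mul_map_of_istar_ile_iplus hPM1 hinv
    tfae_have 1 → 3 := fun hinv _ _ => map_mul_map_of_iplus_ile_istar hPM1 hinv
    tfae_have 2 → 4 := fun h s t hst => h s t (hst ▸ ile_refl _)
    tfae_have 3 → 5 := fun h s t hst => h s t (hst ▸ ile_refl _)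
    tfae_have 4 → 1 := map_inv_of_istar_eq_iplus hPM2
    tfae_have 5 → 1 := map_inv_of_iplus_eq_istar hPM3
    tfae_finish
  · exact map_inv_of_istar_eq_iplus hPM2 fun s t hst => by
      simpa only [← hst, mul_istar] using hLSr s t
  · exact map_mul_iplus_mul_map fun _ _ => map_mul_map_of_istar_ile_iplus hPM1 hinv
  · exact map_mul_map_istar_mul fun _ _ => map_mul_map_of_iplus_ile_istar hPM1 hinv
end

section
/- A surjective morphism ψ: S → T between restriction semigroups is proper if and only if the restriction of ψ to each R̃-class and to each L̃-class is injective; that is, if and only if for all s, t ∈ S: (ψ(s) = ψ(t) and s^+ = t^+ imply s = t) and (ψ(s) = ψ(t) and s^* = t^* imply s = t). -/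
open RestrictionSemigroup

/-!
Within an R̃-class compatibility is equality: `s = s⁺ s = t⁺ s = s⁺ t = t⁺ t = t`, and dually
within an L̃-class. Conversely, if `ψ s = ψ t` then `s t*` and `t s*` both map to `ψ t` and are
L̃-related, since `(s t*)* = s* t* = (t s*)*`; so injectivity on L̃-classes gives `s t* = t s*`,
and dually `t⁺ s = s⁺ t`.
-/

namespace RestrictionSemigroup

variable {S : Type*} [RestrictionSemigroup S]

theorem eq_of_compat_of_rplus_eq {s t : S} (h : compat s t) (hst : rplus s = rplus t) :
    s = t :=
  calc s = rplus s * s := (rplus_mul_self s).symm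
    _ = rplus t * s := by rw [hst]
    _ = rplus s * t := h.2
    _ = rplus t * t := by rw [hst]
    _ = t := rplus_mul_self t

theorem eq_of_compat_of_rstar_eq {s t : S} (h : compat s t) (hst : rstar s = rstar t) :
    s = t :=
  calc s = s * rstar s := (mul_rstar_self s).symm
    _ = s * rstar t := by rw [hst]
    _ = t * rstar s := h.1
    _ = t * rstar t := by rw [hst]
    _ = t := mul_rstar_self t

theorem rstar_mul_rstar_swap (s t : S) : rstar (s * rstar t) = rstar (t * rstar s) := by
  rw [rstar_mul_rstar, rstar_mul_rstar, rstar_comm]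

theorem rplus_rplus_mul_swap (s t : S) : rplus (rplus t * s) = rplus (rplus s * t) := by
  rw [rplus_rplus_mul, rplus_rplus_mul, rplus_comm]

end RestrictionSemigroup

theorem stmt14_general {S T : Type*} [RestrictionSemigroup S] [RestrictionSemigroup T]
    (ψ : S → T)
    (hmul : ∀ a b : S, ψ (a * b) = ψ a * ψ b)
    (hstar : ∀ a : S, ψ (rstar a) = rstar (ψ a))
    (hplus : ∀ a : S, ψ (rplus a) = rplus (ψ a)) :
    (∀ s t : S, ψ s = ψ t → compat s t) ↔
      ((∀ s t : S, ψ s = ψ t → rplus s = rplus t → s = t) ∧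
        (∀ s t : S, ψ s = ψ t → rstar s = rstar t → s = t)) := by
  constructor
  · intro h
    exact ⟨fun s t hst => eq_of_compat_of_rplus_eq (h s t hst),
      fun s t hst => eq_of_compat_of_rstar_eq (h s t hst)⟩
  · rintro ⟨hR, hL⟩ s t hst
    have hψL : ψ (s * rstar t) = ψ (t * rstar s) := by
      rw [hmul, hmul, hstar, hstar, hst]
    have hψR : ψ (rplus t * s) = ψ (rplus s * t) := by
      rw [hmul, hmul, hplus, hplus, hst]
    exact ⟨hL _ _ hψL (rstar_mul_rstar_swap s t), hR _ _ hψR (rplus_rplus_mul_swap s t)⟩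

theorem stmt14 {S T : Type*} [RestrictionSemigroup S] [RestrictionSemigroup T]
    (ψ : S → T) (hsurj : Function.Surjective ψ)
    (hmul : ∀ a b : S, ψ (a * b) = ψ a * ψ b)
    (hstar : ∀ a : S, ψ (rstar a) = rstar (ψ a))
    (hplus : ∀ a : S, ψ (rplus a) = rplus (ψ a)) :
    (∀ s t : S, ψ s = ψ t → compat s t) ↔
      ((∀ s t : S, ψ s = ψ t → rplus s = rplus t → s = t) ∧
        (∀ s t : S, ψ s = ψ t → rstar s = rstar t → s = t)) :=
  stmt14_general ψ hmul hstar hplus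
end
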